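/- Let κ, r > 0 and define the map λ ↦ |h(λ)⟩ ∈ ℂ² by |h(λ)⟩ = √(1 − f(λ)²)|ill⟩ + f(λ)|well⟩ where f is the filter function of the previous statement and {|ill⟩, |well⟩} is an orthonormal basis. Then ‖|h(λ)⟩ − |h(λ̃)⟩‖ ≤ πκr|λ − λ̃| for all λ, λ̃ ∈ [−1,1], and consequently Re⟨h(λ̃)|h(λ)⟩ ≥ 1 − π²κ²r²(λ − λ̃)²/2. -/
import Mathlib

/-- The piecewise-sine filter function approximating the sign function, with transition
region `[1/(2κr), 1/(κr)]` (and symmetrically on the negative side). -/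
noncomputable def filterF (κ r x : ℝ) : ℝ :=
  if x < -(1 / (κ * r)) then -1
  else if x < -(1 / (2 * κ * r)) then
    Real.sin (Real.pi / 2 * ((x + 1 / (2 * κ * r)) / (1 / (κ * r) - 1 / (2 * κ * r))))
  else if x < 1 / (2 * κ * r) then 0
  else if x < 1 / (κ * r) then
    Real.sin (Real.pi / 2 * ((x - 1 / (2 * κ * r)) / (1 / (κ * r) - 1 / (2 * κ * r))))
  else 1

/-- clamp to `[-c, c]` -/
noncomputable def clampF (c x : ℝ) : ℝ := max (-c) (min x c)

/-- the phase function -/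
noncomputable def thetaF (κ r x : ℝ) : ℝ :=
  Real.pi * κ * r * (clampF (1 / (κ * r)) x - clampF (1 / (2 * κ * r)) x)

lemma clampF_mono {c x y : ℝ} (hxy : x ≤ y) : clampF c x ≤ clampF c y :=
  max_le_max le_rfl (min_le_min hxy le_rfl)

lemma clampF_abs_lip (c x y : ℝ) : |clampF c x - clampF c y| ≤ |x - y| :=
  calc |clampF c x - clampF c y| ≤ max |(-c) - (-c)| |min x c - min y c| :=
        abs_max_sub_max_le_max _ _ _ _
    _ = |min x c - min y c| := by simp
    _ ≤ max |x - y| |c - c| := abs_min_sub_min_le_max _ _ _ _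
    _ = |x - y| := by simp

/-- `z ↦ z - clampF a z` is monotone and 1-Lipschitz -/
lemma sF_lip {a z w : ℝ} (hwz : w ≤ z) :
    0 ≤ (z - clampF a z) - (w - clampF a w) ∧ (z - clampF a z) - (w - clampF a w) ≤ z - w := by
  have h1 := clampF_mono (c := a) hwz
  have h2 : clampF a z - clampF a w ≤ z - w := by
    have h3 := le_of_abs_le (clampF_abs_lip a z w)
    have h4 : |z - w| = z - w := abs_of_nonneg (by linarith)
    linarith
  constructor <;> linarith

lemma clampF_clampF {a b x : ℝ} (ha : 0 ≤ a) (hab : a ≤ b) :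
    clampF a (clampF b x) = clampF a x := by
  unfold clampF
  rcases le_total x (-b) with h | h
  · have e1 : min x b = x := min_eq_left (by linarith)
    have e2 : max (-b) x = -b := max_eq_left (by linarith)
    have e3 : min (-b) a = -b := min_eq_left (by linarith)
    have e4 : max (-a) (-b) = -a := max_eq_left (by linarith)
    have e5 : min x a = x := min_eq_left (by linarith)
    have e6 : max (-a) x = -a := max_eq_left (by linarith)
    rw [e1, e2, e3, e4, e5, e6]
  rcases le_total b x with h' | h'
  · have e1 : min x b = b := min_eq_right h'
    have e2 : max (-b) b = b := max_eq_right (by linarith)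
    have e3 : min b a = a := min_eq_right hab
    have e4 : min x a = a := min_eq_right (by linarith)
    rw [e1, e2, e3, e4]
  · have e1 : min x b = x := min_eq_left h'
    have e2 : max (-b) x = x := max_eq_right h
    rw [e1, e2]

lemma tF_abs_lip {a b : ℝ} (ha : 0 ≤ a) (hab : a ≤ b) (x y : ℝ) :
    |(clampF b x - clampF a x) - (clampF b y - clampF a y)| ≤ |x - y| := by
  rw [← clampF_clampF ha hab (x := x), ← clampF_clampF ha hab (x := y)]
  have key : ∀ u v : ℝ, |(u - clampF a u) - (v - clampF a v)| ≤ |u - v| := by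
    intro u v
    rcases le_total v u with huv | huv
    · obtain ⟨h1, h2⟩ := sF_lip (a := a) huv
      rw [abs_of_nonneg h1, abs_of_nonneg (by linarith : (0:ℝ) ≤ u - v)]
      exact h2
    · obtain ⟨h1, h2⟩ := sF_lip (a := a) huv
      rw [abs_sub_comm, abs_sub_comm u v, abs_of_nonneg h1,
        abs_of_nonneg (by linarith : (0:ℝ) ≤ v - u)]
      exact h2
  exact (key (clampF b x) (clampF b y)).trans (clampF_abs_lip b x y)

lemma thetaF_lip {κ r : ℝ} (hκ : 0 < κ) (hr : 0 < r) (x y : ℝ) :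
    |thetaF κ r x - thetaF κ r y| ≤ Real.pi * κ * r * |x - y| := by
  have ha : (0:ℝ) ≤ 1 / (2 * κ * r) := by positivity
  have hab : 1 / (2 * κ * r) ≤ 1 / (κ * r) := by
    rw [div_le_div_iff₀ (by positivity) (by positivity)]; nlinarith
  have hpi : (0:ℝ) ≤ Real.pi * κ * r := by positivity
  unfold thetaF
  rw [← mul_sub, abs_mul, abs_of_nonneg hpi]
  exact mul_le_mul_of_nonneg_left (tF_abs_lip ha hab x y) hpi

lemma thetaF_mem {κ r : ℝ} (hκ : 0 < κ) (hr : 0 < r) (x : ℝ) :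
    thetaF κ r x ∈ Set.Icc (-(Real.pi/2)) (Real.pi/2) := by
  have hκr : κ * r ≠ 0 := by positivity
  have h2κr : 2 * κ * r ≠ 0 := by positivity
  have ha : (0:ℝ) < 1 / (2 * κ * r) := by positivity
  have hab : 1 / (2 * κ * r) ≤ 1 / (κ * r) := by
    rw [div_le_div_iff₀ (by positivity) (by positivity)]; nlinarith
  set a := 1 / (2 * κ * r) with hadef
  set b := 1 / (κ * r) with hbdef
  have hba : b - a = a := by rw [hadef, hbdef]; field_simp; ring
  have h1 : clampF b x - clampF a x ≤ a := by
    have hb : clampF b x ≤ b := max_le (by linarith) (min_le_right _ _)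
    have h2 := (sF_lip (a := a) hb).1
    rw [clampF_clampF ha.le hab] at h2
    have e : clampF a b = a := by
      unfold clampF; rw [min_eq_right hab, max_eq_right (by linarith)]
    rw [e] at h2
    linarith
  have h2 : -a ≤ clampF b x - clampF a x := by
    have hb : -b ≤ clampF b x := le_max_left _ _
    have h2 := (sF_lip (a := a) hb).1
    rw [clampF_clampF ha.le hab] at h2
    have e : clampF a (-b) = -a := by
      unfold clampF; rw [min_eq_left (by linarith), max_eq_left (by linarith)]
    rw [e] at h2
    linarith
  have key : Real.pi * κ * r * a = Real.pi / 2 := by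
    rw [hadef]; field_simp
  have hpi : (0:ℝ) ≤ Real.pi * κ * r := by positivity
  constructor
  · rw [← key]; unfold thetaF; rw [← hadef, ← hbdef]; nlinarith
  · rw [← key]; unfold thetaF; rw [← hadef, ← hbdef]; nlinarith

lemma filterF_eq_sin {κ r : ℝ} (hκ : 0 < κ) (hr : 0 < r) (x : ℝ) :
    filterF κ r x = Real.sin (thetaF κ r x) := by
  have hκr : κ * r ≠ 0 := by positivity
  have h2κr : 2 * κ * r ≠ 0 := by positivity
  have ha : (0:ℝ) < 1 / (2 * κ * r) := by positivity
  have hb : (0:ℝ) < 1 / (κ * r) := by positivity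
  have hab : 1 / (2 * κ * r) ≤ 1 / (κ * r) := by
    rw [div_le_div_iff₀ (by positivity) (by positivity)]; nlinarith
  set a := 1 / (2 * κ * r) with hadef
  set b := 1 / (κ * r) with hbdef
  have hba : b - a = a := by rw [hadef, hbdef]; field_simp; ring
  have key : Real.pi * κ * r * a = Real.pi / 2 := by
    rw [hadef]; field_simp
  unfold filterF thetaF clampF
  rw [← hadef, ← hbdef]
  split_ifs with h1 h2 h3 h4
  · -- x < -b
    have e1 : min x b = x := min_eq_left (by linarith)
    have e2 : max (-b) x = -b := max_eq_left (by linarith)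
    have e3 : min x a = x := min_eq_left (by linarith)
    have e4 : max (-a) x = -a := max_eq_left (by linarith)
    rw [e1, e2, e3, e4]
    have : Real.pi * κ * r * (-b - -a) = -(Real.pi / 2) := by
      rw [show -b - -a = -(b - a) by ring, hba, mul_neg, key]
    rw [this, Real.sin_neg, Real.sin_pi_div_two]
  · -- -b ≤ x < -a
    have e1 : min x b = x := min_eq_left (by linarith)
    have e2 : max (-b) x = x := max_eq_right (by linarith)
    have e3 : min x a = x := min_eq_left (by linarith)
    have e4 : max (-a) x = -a := max_eq_left (by linarith)
    rw [e1, e2, e3, e4]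
    congr 1
    rw [hba]
    rw [show x - -a = x + a by ring]
    rw [mul_comm_div, div_eq_inv_mul, hadef]
    field_simp
  · -- -a ≤ x < a
    have e1 : min x b = x := min_eq_left (by linarith)
    have e2 : max (-b) x = x := max_eq_right (by linarith)
    have e3 : min x a = x := min_eq_left (by linarith)
    have e4 : max (-a) x = x := max_eq_right (by linarith)
    rw [e1, e2, e3, e4]
    simp
  · -- a ≤ x < b
    have e1 : min x b = x := min_eq_left (by linarith)
    have e2 : max (-b) x = x := max_eq_right (by linarith)
    have e3 : min x a = a := min_eq_right (by linarith)
    have e4 : max (-a) a = a := max_eq_right (by linarith)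
    rw [e1, e2, e3, e4]
    congr 1
    rw [hba]
    rw [mul_comm_div, div_eq_inv_mul, hadef]
    field_simp
  · -- b ≤ x
    have e1 : min x b = b := min_eq_right (by linarith)
    have e2 : max (-b) b = b := max_eq_right (by linarith)
    have e3 : min x a = a := min_eq_right (by linarith)
    have e4 : max (-a) a = a := max_eq_right (by linarith)
    rw [e1, e2, e3, e4]
    rw [hba, key, Real.sin_pi_div_two]

lemma sqrt_one_sub {κ r : ℝ} (hκ : 0 < κ) (hr : 0 < r) (x : ℝ) :
    Real.sqrt (1 - filterF κ r x ^ 2) = Real.cos (thetaF κ r x) := by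
  rw [filterF_eq_sin hκ hr]
  have hcos : 0 ≤ Real.cos (thetaF κ r x) :=
    Real.cos_nonneg_of_mem_Icc (thetaF_mem hκ hr x)
  rw [show (1 : ℝ) - Real.sin (thetaF κ r x) ^ 2 = Real.cos (thetaF κ r x) ^ 2 by
    have := Real.sin_sq_add_cos_sq (thetaF κ r x); linarith]
  exact Real.sqrt_sq hcos

lemma one_sub_half_sq_le_cos (u : ℝ) : 1 - u ^ 2 / 2 ≤ Real.cos u := by
  rcases eq_or_ne u 0 with rfl | hu
  · simp
  · exact (Real.one_sub_sq_div_two_lt_cos hu).le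

open Matrix in
/-- The map `λ ↦ |h(λ)⟩ = √(1−f(λ)²)|ill⟩ + f(λ)|well⟩` is `πκr`-Lipschitz on `[−1,1]`,
and consequently `Re⟨h(λ̃)|h(λ)⟩ ≥ 1 − π²κ²r²(λ−λ̃)²/2`. -/
theorem stmt_14 (κ r : ℝ) (hκ : 0 < κ) (hr : 0 < r)
    (h : ℝ → (Fin 2 → ℂ))
    (hh : ∀ lam, h lam =
      ![(Real.sqrt (1 - filterF κ r lam ^ 2) : ℂ), (filterF κ r lam : ℂ)]) :
    ∀ lam lam' : ℝ, lam ∈ Set.Icc (-1 : ℝ) 1 → lam' ∈ Set.Icc (-1 : ℝ) 1 →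
      Real.sqrt (∑ i, ‖h lam i - h lam' i‖ ^ 2) ≤ Real.pi * κ * r * |lam - lam'| ∧
      1 - Real.pi ^ 2 * κ ^ 2 * r ^ 2 * (lam - lam') ^ 2 / 2 ≤ (star (h lam') ⬝ᵥ h lam).re := by
  intro lam lam' _ _
  set θ := thetaF κ r lam with hθ
  set θ' := thetaF κ r lam' with hθ'
  have hf : filterF κ r lam = Real.sin θ := filterF_eq_sin hκ hr lam
  have hf' : filterF κ r lam' = Real.sin θ' := filterF_eq_sin hκ hr lam'
  have hs : Real.sqrt (1 - filterF κ r lam ^ 2) = Real.cos θ := sqrt_one_sub hκ hr lam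
  have hs' : Real.sqrt (1 - filterF κ r lam' ^ 2) = Real.cos θ' := sqrt_one_sub hκ hr lam'
  have hlip : |θ - θ'| ≤ Real.pi * κ * r * |lam - lam'| := thetaF_lip hκ hr lam lam'
  have h2 : 2 - 2 * Real.cos (θ - θ') ≤ (θ - θ') ^ 2 := by
    have := one_sub_half_sq_le_cos (θ - θ')
    linarith
  have h3 : (θ - θ') ^ 2 ≤ (Real.pi * κ * r * |lam - lam'|) ^ 2 := by
    have h5 := abs_nonneg (θ - θ')
    nlinarith [sq_abs (θ - θ'), hlip]
  have hkey : (Real.cos θ - Real.cos θ') ^ 2 + (Real.sin θ - Real.sin θ') ^ 2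
      ≤ (Real.pi * κ * r * |lam - lam'|) ^ 2 := by
    have h1 : (Real.cos θ - Real.cos θ') ^ 2 + (Real.sin θ - Real.sin θ') ^ 2
        = 2 - 2 * Real.cos (θ - θ') := by
      rw [Real.cos_sub]
      nlinarith [Real.sin_sq_add_cos_sq θ, Real.sin_sq_add_cos_sq θ']
    linarith
  have hsum : (∑ i, ‖h lam i - h lam' i‖ ^ 2)
      = (Real.cos θ - Real.cos θ') ^ 2 + (Real.sin θ - Real.sin θ') ^ 2 := by
    rw [hh lam, hh lam', Fin.sum_univ_two]
    simp only [Matrix.cons_val_zero, Matrix.cons_val_one, Matrix.head_cons]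
    rw [hs, hs', hf, hf', ← Complex.ofReal_sub, ← Complex.ofReal_sub,
      Complex.norm_real, Complex.norm_real, Real.norm_eq_abs, Real.norm_eq_abs,
      sq_abs, sq_abs]
  constructor
  · rw [hsum]
    have hle := Real.sqrt_le_sqrt hkey
    rwa [Real.sqrt_sq (by positivity : (0:ℝ) ≤ Real.pi * κ * r * |lam - lam'|)] at hle
  · have hre : (star (h lam') ⬝ᵥ h lam).re
        = Real.cos θ' * Real.cos θ + Real.sin θ' * Real.sin θ := by
      rw [hh lam, hh lam']
      simp only [dotProduct, Fin.sum_univ_two, Pi.star_apply, Matrix.cons_val_zero,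
        Matrix.cons_val_one, Matrix.head_cons, RCLike.star_def, Complex.conj_ofReal,
        ← Complex.ofReal_mul, ← Complex.ofReal_add, Complex.ofReal_re]
      rw [hs, hs', hf, hf']
    rw [hre]
    have hcos : Real.cos θ' * Real.cos θ + Real.sin θ' * Real.sin θ
        = Real.cos (θ - θ') := by rw [Real.cos_sub]; ring
    rw [hcos]
    have h4 : (Real.pi * κ * r * |lam - lam'|) ^ 2
        = Real.pi ^ 2 * κ ^ 2 * r ^ 2 * (lam - lam') ^ 2 := by
      rw [mul_pow, mul_pow, mul_pow, sq_abs]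
    nlinarith
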